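/- Let D be a type of program configurations, Pre Bad : Set D, Trans : Set (D × D), and let the invariant target specification be T_Inv = {X : Set D | Pre ⊆ X ∧ X ∩ Bad = ∅ ∧ ∀ (c, c') ∈ Trans, c ∈ X → c' ∈ X}. Let H be any hypothesis space with γ : H → Set D. Then there exists a teacher for the ICE ALF instance: a function τ assigning to every h : H an ICE sample (P, N, I) such that (progress) if γ h ∈ T_Inv then τ h = (∅, ∅, ∅), and if γ h ∉ T_Inv then γ h ∉ κ_ICE (τ h); and (honesty) T_Inv ⊆ κ_ICE (τ h) for every h. -/
import Mathlib


/-- Consistency function for ICE samples `(P, N, I)` over a type `D` of program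
configurations. -/
def iceConsistent {D : Type*} (s : Set D × Set D × Set (D × D)) : Set (Set D) :=
  {X : Set D | s.1 ⊆ X ∧ X ∩ s.2.1 = ∅ ∧ ∀ p ∈ s.2.2, p.1 ∈ X → p.2 ∈ X}

/-- The invariant target specification for precondition `Pre`, bad states `Bad`, and
transition relation `Trans`. -/
def TInv {D : Type*} (Pre Bad : Set D) (Trans : Set (D × D)) : Set (Set D) :=
  {X : Set D | Pre ⊆ X ∧ X ∩ Bad = ∅ ∧ ∀ p ∈ Trans, p.1 ∈ X → p.2 ∈ X}

/-- there is a teacher for the ICE ALF instance with the invariant target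
specification. -/
theorem exists_ice_teacher_for_invariants {D H : Type*}
    (Pre Bad : Set D) (Trans : Set (D × D)) (γ : H → Set D) :
    ∃ τ : H → Set D × Set D × Set (D × D),
      ∀ h : H,
        (γ h ∈ TInv Pre Bad Trans → τ h = (∅, ∅, ∅)) ∧
        (γ h ∉ TInv Pre Bad Trans → γ h ∉ iceConsistent (τ h)) ∧
        TInv Pre Bad Trans ⊆ iceConsistent (τ h) := by
  classical
  -- For each h, choose a sample
  have key : ∀ h : H, ∃ s : Set D × Set D × Set (D × D),
      (γ h ∈ TInv Pre Bad Trans → s = (∅, ∅, ∅)) ∧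
      (γ h ∉ TInv Pre Bad Trans → γ h ∉ iceConsistent s) ∧
      TInv Pre Bad Trans ⊆ iceConsistent s := by
    intro h
    by_cases hin : γ h ∈ TInv Pre Bad Trans
    · refine ⟨(∅, ∅, ∅), fun _ => rfl, fun hn => absurd hin hn, fun X _ => ?_⟩
      exact ⟨Set.empty_subset X, Set.inter_empty X, fun p hp => hp.elim⟩
    · simp only [TInv, Set.mem_setOf_eq, not_and_or] at hin
      rcases hin with hP | hin
      · -- positive counterexample
        rw [Set.not_subset] at hP
        obtain ⟨d, hdP, hdγ⟩ := hP
        refine ⟨({d}, ∅, ∅), ?_, fun _ hc => hdγ (hc.1 rfl), fun X hX => ?_⟩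
        · intro hin'; exact absurd (hin'.1 hdP) hdγ
        · exact ⟨Set.singleton_subset_iff.2 (hX.1 hdP), Set.inter_empty X,
            fun p hp => hp.elim⟩
      rcases hin with hN | hI
      · -- negative counterexample
        have : ∃ d, d ∈ γ h ∩ Bad := by
          rw [← Set.nonempty_def]; exact Set.nonempty_iff_ne_empty.2 hN
        obtain ⟨d, hdγ, hdB⟩ := this
        refine ⟨(∅, {d}, ∅), ?_, fun _ hc => ?_, fun X hX => ?_⟩
        · intro hin'
          have := hin'.2.1
          have : d ∉ γ h := fun hd => by
            have : d ∈ γ h ∩ Bad := ⟨hd, hdB⟩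
            rw [hin'.2.1] at this; exact this
          exact absurd hdγ this
        · have : d ∈ γ h ∩ {d} := ⟨hdγ, rfl⟩
          rw [hc.2.1] at this; exact this
        · refine ⟨Set.empty_subset X, ?_, fun p hp => hp.elim⟩
          ext x
          simp only [Set.mem_inter_iff, Set.mem_singleton_iff, Set.mem_empty_iff_false,
            iff_false, not_and]
          rintro hxX rfl
          have : x ∈ X ∩ Bad := ⟨hxX, hdB⟩
          rw [hX.2.1] at this; exact this
      · -- implication counterexample
        push_neg at hI
        obtain ⟨p, hpT, hp1, hp2⟩ := hI
        refine ⟨(∅, ∅, {p}), ?_, fun _ hc => hp2 (hc.2.2 p rfl hp1), fun X hX => ?_⟩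
        · intro hin'; exact absurd (hin'.2.2 p hpT hp1) hp2
        · refine ⟨Set.empty_subset X, Set.inter_empty X, ?_⟩
          intro q hq hq1
          rw [Set.mem_singleton_iff] at hq; subst hq
          exact hX.2.2 _ hpT hq1
  choose τ hτ using key
  exact ⟨τ, hτ⟩
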